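/- Let H > 0 and define the log-modulated fractional kernel K(t) := t^{H−1/2} log(1 + 1/t) / Γ(H + 1/2) for t > 0. Then: (a) ∫₀ᵗ K(s)² ds ∼ t^{2H} (log(1/t))² / (2H Γ(H+1/2)²) as t ↘ 0; and (b) for every γ ∈ (0, H) there exist constants C*, C > 0 such that C* t^{2H} ≤ ∫₀ᵗ K(s)² ds ≤ C t^{2γ} for all t ∈ (0, 1]. -/

import Mathlib

/-!
On `(0, 1]` we have `log 2 ≤ log (1 + 1/s) ≤ (2/s)^ε / ε`, so with `ε = H - γ` the square
`K(s)²` lies between multiples of `s^(2H-1)` and `s^(2γ-1)`; integrating these powers gives (b).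
For (a), `∫₀ᵗ K²` and `t^(2H) (log t)² / (2H Γ(H+1/2)²)` both vanish at `0⁺`, and the ratio of
their derivatives is `(log (1 + 1/t) / log t)² / (1 + 1/(H log t))`, which tends to `1`; so
L'Hôpital's rule takes the place of Karamata's theorem.
-/

open MeasureTheory Set Filter intervalIntegral

noncomputable def logModKernel (H t : ℝ) : ℝ :=
  t ^ (H - 1/2) * Real.log (1 + 1/t) / Real.Gamma (H + 1/2)

open Real Topology

theorem log_one_add_one_div_le {ε s : ℝ} (hε : 0 < ε) (hs : 0 < s) (hs1 : s ≤ 1) :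
    log (1 + 1 / s) ≤ 2 ^ ε / ε * s ^ (-ε) := calc
  log (1 + 1 / s) ≤ (1 + 1 / s) ^ ε / ε := log_le_rpow_div (by positivity) hε
  _ ≤ (2 / s) ^ ε / ε := by
    gcongr
    linarith [one_le_one_div hs hs1, show 2 / s = 1 / s + 1 / s by ring]
  _ = 2 ^ ε / ε * s ^ (-ε) := by
    rw [div_rpow zero_le_two hs.le, rpow_neg hs.le]
    ring

theorem integral_const_mul_rpow_sub_one {p : ℝ} (hp : 0 < p) (c t : ℝ) :
    ∫ s in (0:ℝ)..t, c * s ^ (p - 1) = c / p * t ^ p := by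
  rw [intervalIntegral.integral_const_mul, integral_rpow (Or.inl (by linarith)), sub_add_cancel,
    zero_rpow hp.ne', sub_zero, mul_div_assoc', div_mul_eq_mul_div]

theorem const_div_mul_rpow_le_integral {f : ℝ → ℝ} {c p t : ℝ} (hp : 0 < p) (ht : 0 ≤ t)
    (hf : IntervalIntegrable f volume 0 t) (h : ∀ s ∈ Ioo 0 t, c * s ^ (p - 1) ≤ f s) :
    c / p * t ^ p ≤ ∫ s in (0:ℝ)..t, f s := by
  rw [← integral_const_mul_rpow_sub_one hp]
  exact integral_mono_on_of_le_Ioo ht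
    ((intervalIntegrable_rpow' (by linarith)).const_mul c) hf h

theorem integral_le_const_div_mul_rpow {f : ℝ → ℝ} {c p t : ℝ} (hp : 0 < p) (ht : 0 ≤ t)
    (hf : IntervalIntegrable f volume 0 t) (h : ∀ s ∈ Ioo 0 t, f s ≤ c * s ^ (p - 1)) :
    ∫ s in (0:ℝ)..t, f s ≤ c / p * t ^ p := by
  rw [← integral_const_mul_rpow_sub_one hp]
  exact integral_mono_on_of_le_Ioo ht hf
    ((intervalIntegrable_rpow' (by linarith)).const_mul c) h

theorem tendsto_primitive_div_nhdsGT_zero {f g g' : ℝ → ℝ} {b l : ℝ} (hb : 0 < b)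
    (hf : IntervalIntegrable f volume 0 b) (hfc : ContinuousOn f (Ioo 0 b))
    (hg : ∀ x ∈ Ioo 0 b, HasDerivAt g (g' x) x) (hg' : ∀ x ∈ Ioo 0 b, g' x ≠ 0)
    (hg0 : Tendsto g (𝓝[>] 0) (𝓝 0)) (hfg : Tendsto (fun x => f x / g' x) (𝓝[>] 0) (𝓝 l)) :
    Tendsto (fun t => (∫ s in (0:ℝ)..t, f s) / g t) (𝓝[>] 0) (𝓝 l) := by
  have hF : ∀ x ∈ Ioo 0 b, HasDerivAt (fun t => ∫ s in (0:ℝ)..t, f s) (f x) x := fun x hx =>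
    integral_hasDerivAt_right
      (hf.mono_set (uIcc_subset_uIcc_left (by simp [uIcc_of_le hb.le, hx.1.le, hx.2.le])))
      (hfc.stronglyMeasurableAtFilter isOpen_Ioo x hx) (hfc.continuousAt (isOpen_Ioo.mem_nhds hx))
  have hF0 : Tendsto (fun t => ∫ s in (0:ℝ)..t, f s) (𝓝[>] 0) (𝓝 0) := by
    have := (continuousOn_primitive_interval' hf left_mem_uIcc 0 left_mem_uIcc).mono
      (Ioo_subset_Icc_self.trans Icc_subset_uIcc)
    rw [ContinuousWithinAt, nhdsWithin_Ioo_eq_nhdsGT hb, integral_same] at this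
    exact this
  exact HasDerivAt.lhopital_zero_right_on_Ioo hb hF hg hg' hF0 hg0 hfg

theorem hasDerivAt_rpow_mul_log_sq {x : ℝ} (hx : 0 < x) (p : ℝ) :
    HasDerivAt (fun t => t ^ p * log t ^ 2) (x ^ (p - 1) * log x * (p * log x + 2)) x := by
  refine ((hasDerivAt_rpow_const (p := p) (Or.inl hx.ne')).mul
    ((hasDerivAt_log hx.ne').pow 2)).congr_deriv ?_
  rw [show x ^ p = x ^ (p - 1) * x by rw [← rpow_add_one hx.ne', sub_add_cancel]]
  simp only [Pi.pow_apply]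
  field_simp
  ring

theorem tendsto_rpow_mul_log_sq_nhdsGT_zero {p : ℝ} (hp : 0 < p) :
    Tendsto (fun t => t ^ p * log t ^ 2) (𝓝[>] 0) (𝓝 0) := by
  have h := (tendsto_log_mul_rpow_nhdsGT_zero (half_pos hp)).pow 2
  rw [zero_pow two_ne_zero] at h
  refine h.congr' ?_
  filter_upwards [self_mem_nhdsWithin] with t (ht : 0 < t)
  rw [mul_pow, ← rpow_natCast (t ^ _), ← rpow_mul ht.le]
  norm_num
  ring

theorem tendsto_log_one_add_one_div_div_log :
    Tendsto (fun x => log (1 + 1 / x) / log x) (𝓝[>] 0) (𝓝 (-1)) := by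
  have hlog1p : Tendsto (fun x => log (1 + x)) (𝓝[>] 0) (𝓝 0) := by
    simpa using ((continuous_const.add continuous_id).continuousAt.log (by norm_num) :
      ContinuousAt (fun x : ℝ => log (1 + x)) 0).tendsto.mono_left nhdsWithin_le_nhds
  have h := (hlog1p.div_atBot tendsto_log_nhdsGT_zero).sub_const 1
  rw [zero_sub] at h
  refine h.congr' ?_
  filter_upwards [Ioo_mem_nhdsGT one_pos] with x ⟨hx0, hx1⟩
  have hlog : log x ≠ 0 := (log_neg hx0 hx1).ne
  rw [show 1 + 1 / x = (1 + x) / x by field_simp; ring, log_div (by positivity) hx0.ne']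
  field_simp

theorem logModKernel_sq {H s : ℝ} (hs : 0 < s) :
    logModKernel H s ^ 2 = s ^ (2 * H - 1) * log (1 + 1 / s) ^ 2 / Gamma (H + 1 / 2) ^ 2 := by
  rw [logModKernel, div_pow, mul_pow, ← rpow_natCast, ← rpow_mul hs.le]
  norm_num
  ring_nf

theorem log_two_sq_mul_le_logModKernel_sq {H s : ℝ} (hs : 0 < s) (hs1 : s ≤ 1) :
    log 2 ^ 2 / Gamma (H + 1 / 2) ^ 2 * s ^ (2 * H - 1) ≤ logModKernel H s ^ 2 := by
  rw [logModKernel_sq hs, div_mul_eq_mul_div, mul_comm]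
  gcongr
  linarith [one_le_one_div hs hs1]

theorem logModKernel_sq_le {H γ s : ℝ} (hγH : γ < H) (hs : 0 < s) (hs1 : s ≤ 1) :
    logModKernel H s ^ 2 ≤
      (2 ^ (H - γ) / (H - γ)) ^ 2 / Gamma (H + 1 / 2) ^ 2 * s ^ (2 * γ - 1) := by
  have hlog := log_one_add_one_div_le (sub_pos.2 hγH) hs hs1
  calc logModKernel H s ^ 2
      ≤ s ^ (2 * H - 1) * (2 ^ (H - γ) / (H - γ) * s ^ (-(H - γ))) ^ 2 /
          Gamma (H + 1 / 2) ^ 2 := by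
        rw [logModKernel_sq hs]
        gcongr
        exact log_nonneg (by linarith [one_div_pos.2 hs])
    _ = _ := by
        rw [mul_pow, ← rpow_natCast (s ^ _), ← rpow_mul hs.le, mul_left_comm, ← rpow_add hs]
        ring_nf

theorem continuousOn_logModKernel (H : ℝ) : ContinuousOn (logModKernel H) (Ioi 0) := by
  intro s (hs : 0 < s)
  have hlog : ContinuousAt (fun t : ℝ => log (1 + 1 / t)) s :=
    ContinuousAt.log (by fun_prop (disch := exact hs.ne')) (by positivity)
  exact (((continuousAt_rpow_const _ _ (Or.inl hs.ne')).mul hlog).div_const _).continuousWithinAt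

theorem intervalIntegrable_logModKernel_sq {H t : ℝ} (hH : 0 < H) (ht0 : 0 ≤ t) (ht1 : t ≤ 1) :
    IntervalIntegrable (fun s => logModKernel H s ^ 2) volume 0 t := by
  refine ((intervalIntegrable_rpow' (r := 2 * (H / 2) - 1) (by linarith)).const_mul
    ((2 ^ (H - H / 2) / (H - H / 2)) ^ 2 / Gamma (H + 1 / 2) ^ 2)).mono_fun' ?_ ?_
  · rw [uIoc_of_le ht0]
    exact (((continuousOn_logModKernel H).pow 2).mono Ioc_subset_Ioi_self).aestronglyMeasurable
      measurableSet_Ioc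
  · rw [uIoc_of_le ht0]
    refine (ae_restrict_mem measurableSet_Ioc).mono fun s hs => ?_
    dsimp only
    rw [norm_of_nonneg (sq_nonneg _)]
    exact logModKernel_sq_le (by linarith) hs.1 (hs.2.trans ht1)

theorem le_integral_logModKernel_sq {H t : ℝ} (hH : 0 < H) (ht : t ∈ Ioc 0 1) :
    log 2 ^ 2 / Gamma (H + 1 / 2) ^ 2 / (2 * H) * t ^ (2 * H) ≤
      ∫ s in (0:ℝ)..t, logModKernel H s ^ 2 :=
  const_div_mul_rpow_le_integral (by positivity) ht.1.le
    (intervalIntegrable_logModKernel_sq hH ht.1.le ht.2)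
    fun _ hs => log_two_sq_mul_le_logModKernel_sq hs.1 (hs.2.le.trans ht.2)

theorem integral_logModKernel_sq_le {H γ t : ℝ} (hγ : 0 < γ) (hγH : γ < H) (ht : t ∈ Ioc 0 1) :
    ∫ s in (0:ℝ)..t, logModKernel H s ^ 2 ≤
      (2 ^ (H - γ) / (H - γ)) ^ 2 / Gamma (H + 1 / 2) ^ 2 / (2 * γ) * t ^ (2 * γ) :=
  integral_le_const_div_mul_rpow (by positivity) ht.1.le
    (intervalIntegrable_logModKernel_sq (hγ.trans hγH) ht.1.le ht.2)
    fun _ hs => logModKernel_sq_le hγH hs.1 (hs.2.le.trans ht.2)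

theorem mul_log_add_one_neg {H x : ℝ} (hH : 0 < H) (hx : x ∈ Ioo 0 (exp (-H⁻¹))) :
    H * log x + 1 < 0 := by
  have := log_lt_log hx.1 hx.2
  rw [log_exp, lt_neg, inv_lt_iff_one_lt_mul₀' hH] at this
  linarith

theorem tendsto_logModKernel_sq_div_deriv {H : ℝ} (hH : 0 < H) :
    Tendsto (fun x => logModKernel H x ^ 2 /
      (x ^ (2 * H - 1) * log x * (2 * H * log x + 2) / (2 * H * Gamma (H + 1 / 2) ^ 2)))
      (𝓝[>] 0) (𝓝 1) := by
  have hG : 0 < Gamma (H + 1 / 2) := Gamma_pos_of_pos (by linarith)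
  have hinv : Tendsto (fun x => 1 + (H * log x)⁻¹) (𝓝[>] 0) (𝓝 1) := by
    simpa using ((tendsto_log_nhdsGT_zero.const_mul_atBot hH).inv_tendsto_atBot).const_add 1
  have h := (tendsto_log_one_add_one_div_div_log.pow 2).div hinv one_ne_zero
  rw [neg_one_sq, div_one] at h
  refine h.congr' ?_
  filter_upwards [Ioo_mem_nhdsGT (exp_pos (-H⁻¹))] with x hx
  have hneg := mul_log_add_one_neg hH hx
  have hlog : log x ≠ 0 := by nlinarith
  have hpow : 0 < x ^ (2 * H - 1) := rpow_pos_of_pos hx.1 _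
  have hfac : 2 * H * log x + 2 ≠ 0 := by linarith
  rw [Pi.div_apply, logModKernel_sq hx.1]
  generalize x ^ (2 * H - 1) = y at hpow ⊢
  field_simp

theorem tendsto_integral_logModKernel_sq_div {H : ℝ} (hH : 0 < H) :
    Tendsto (fun t => (∫ s in (0:ℝ)..t, logModKernel H s ^ 2) /
      (t ^ (2 * H) * log t ^ 2 / (2 * H * Gamma (H + 1 / 2) ^ 2))) (𝓝[>] 0) (𝓝 1) := by
  have hc : 0 < 2 * H * Gamma (H + 1 / 2) ^ 2 := by
    have := Gamma_pos_of_pos (by linarith : 0 < H + 1 / 2)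
    positivity
  refine tendsto_primitive_div_nhdsGT_zero (exp_pos (-H⁻¹))
    (intervalIntegrable_logModKernel_sq hH (exp_pos _).le (exp_le_one_iff.2 (by simp [hH.le])))
    (((continuousOn_logModKernel H).pow 2).mono Ioo_subset_Ioi_self)
    (fun x hx => (hasDerivAt_rpow_mul_log_sq hx.1 _).div_const _) (fun x hx => ?_)
    (by simpa using (tendsto_rpow_mul_log_sq_nhdsGT_zero (by positivity : 0 < 2 * H)).div_const _)
    (tendsto_logModKernel_sq_div_deriv hH)
  have hneg := mul_log_add_one_neg hH hx
  have hlog : log x < 0 := by nlinarith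
  exact (div_pos (mul_pos_of_neg_of_neg (mul_neg_of_pos_of_neg (rpow_pos_of_pos hx.1 _) hlog)
    (by linarith)) hc).ne'

/-- Example 5.2: (a) `∫₀ᵗ K(s)² ds ∼ t^{2H} (log(1/t))²/(2H Γ(H+1/2)²)` as
`t ↘ 0`, and (b) for every `γ ∈ (0,H)` the two-sided power bounds
`C* t^{2H} ≤ ∫₀ᵗ K(s)² ds ≤ C t^{2γ}` hold on `(0,1]`. -/
theorem stmt_16 (H : ℝ) (hH : 0 < H) :
    Filter.Tendsto (fun t : ℝ =>
        (∫ s in (0:ℝ)..t, (logModKernel H s) ^ 2) /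
          (t ^ (2 * H) * (Real.log (1 / t)) ^ 2 / (2 * H * Real.Gamma (H + 1/2) ^ 2)))
      (nhdsWithin 0 (Set.Ioi 0)) (nhds 1) ∧
    ∀ γ : ℝ, 0 < γ → γ < H →
      ∃ Cstar C : ℝ, 0 < Cstar ∧ 0 < C ∧
        ∀ t ∈ Set.Ioc (0 : ℝ) 1,
          Cstar * t ^ (2 * H) ≤ (∫ s in (0:ℝ)..t, (logModKernel H s) ^ 2) ∧
            (∫ s in (0:ℝ)..t, (logModKernel H s) ^ 2) ≤ C * t ^ (2 * γ) := by
  have hG : 0 < Gamma (H + 1 / 2) := Gamma_pos_of_pos (by linarith)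
  refine ⟨?_, fun γ hγ hγH => ⟨_, _, ?_, ?_, fun t ht =>
    ⟨le_integral_logModKernel_sq hH ht, integral_logModKernel_sq_le hγ hγH ht⟩⟩⟩
  · simpa only [one_div, log_inv, neg_sq] using tendsto_integral_logModKernel_sq_div hH
  · have := log_pos one_lt_two
    positivity
  · have := sub_pos.2 hγH
    positivity
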